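/- arXiv:1710.07876 — 5 statements merged into one kernel-verified Lean document; each statement's English description precedes it below -/
import Mathlib

section
/- Let (X, dist) be a metric space. For two discrete measures μ0 = (p0, ν0) and μ1 = (p1, ν1) on X, with d(μ0, μ1) defined as the square root of the minimal coupling cost with cost dist², the triangle inequality holds: for any three discrete measures μ0, μ1, μ2 on X, d(μ0, μ2) ≤ d(μ0, μ1) + d(μ1, μ2). -/
open Finset

/-- A probability vector: nonnegative entries summing to 1. -/
def IsProbVec {N : ℕ} (p : Fin N → ℝ) : Prop :=
  (∀ i, 0 ≤ p i) ∧ ∑ i, p i = 1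

/-- A coupling of two probability vectors. -/
def IsCoupling {N0 N1 : ℕ} (p0 : Fin N0 → ℝ) (p1 : Fin N1 → ℝ)
    (π : Fin N0 → Fin N1 → ℝ) : Prop :=
  (∀ i j, 0 ≤ π i j) ∧ (∀ i, ∑ j, π i j = p0 i) ∧ (∀ j, ∑ i, π i j = p1 j)

/-- The transport distance between two discrete measures `(p0, ν0)` and `(p1, ν1)`
on a metric space, with cost `dist²`. -/
noncomputable def discDist {X : Type*} [MetricSpace X] {N0 N1 : ℕ}
    (p0 : Fin N0 → ℝ) (ν0 : Fin N0 → X) (p1 : Fin N1 → ℝ) (ν1 : Fin N1 → X) : ℝ :=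
  Real.sqrt (sInf {c : ℝ | ∃ π : Fin N0 → Fin N1 → ℝ, IsCoupling p0 p1 π ∧
    c = ∑ i, ∑ j, π i j * dist (ν0 i) (ν1 j) ^ 2})

namespace DiscAux

variable {X : Type*} [MetricSpace X]

/-- The transport cost of a coupling. -/
noncomputable def cost {N0 N1 : ℕ} (π : Fin N0 → Fin N1 → ℝ)
    (ν0 : Fin N0 → X) (ν1 : Fin N1 → X) : ℝ :=
  ∑ i, ∑ j, π i j * dist (ν0 i) (ν1 j) ^ 2

/-- The set of achievable costs. -/
def costSet {N0 N1 : ℕ} (p0 : Fin N0 → ℝ) (ν0 : Fin N0 → X)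
    (p1 : Fin N1 → ℝ) (ν1 : Fin N1 → X) : Set ℝ :=
  {c : ℝ | ∃ π : Fin N0 → Fin N1 → ℝ, IsCoupling p0 p1 π ∧ c = cost π ν0 ν1}

lemma discDist_eq {N0 N1 : ℕ} (p0 : Fin N0 → ℝ) (ν0 : Fin N0 → X)
    (p1 : Fin N1 → ℝ) (ν1 : Fin N1 → X) :
    discDist p0 ν0 p1 ν1 = Real.sqrt (sInf (costSet p0 ν0 p1 ν1)) := rfl

lemma cost_nonneg {N0 N1 : ℕ} {π : Fin N0 → Fin N1 → ℝ} (hπ : ∀ i j, 0 ≤ π i j)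
    (ν0 : Fin N0 → X) (ν1 : Fin N1 → X) : 0 ≤ cost π ν0 ν1 :=
  Finset.sum_nonneg fun i _ => Finset.sum_nonneg fun j _ =>
    mul_nonneg (hπ i j) (sq_nonneg _)

lemma costSet_nonempty {N0 N1 : ℕ} {p0 : Fin N0 → ℝ} (ν0 : Fin N0 → X)
    {p1 : Fin N1 → ℝ} (ν1 : Fin N1 → X) (h0 : IsProbVec p0) (h1 : IsProbVec p1) :
    (costSet p0 ν0 p1 ν1).Nonempty := by
  refine ⟨cost (fun i j => p0 i * p1 j) ν0 ν1, fun i j => p0 i * p1 j, ⟨?_, ?_, ?_⟩, rfl⟩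
  · exact fun i j => mul_nonneg (h0.1 i) (h1.1 j)
  · intro i; rw [← Finset.mul_sum, h1.2, mul_one]
  · intro j; rw [← Finset.sum_mul, h0.2, one_mul]

lemma costSet_bddBelow {N0 N1 : ℕ} (p0 : Fin N0 → ℝ) (ν0 : Fin N0 → X)
    (p1 : Fin N1 → ℝ) (ν1 : Fin N1 → X) : BddBelow (costSet p0 ν0 p1 ν1) := by
  refine ⟨0, fun c hc => ?_⟩
  obtain ⟨π, hπ, rfl⟩ := hc
  exact cost_nonneg hπ.1 ν0 ν1

lemma sInf_costSet_nonneg {N0 N1 : ℕ} (p0 : Fin N0 → ℝ) (ν0 : Fin N0 → X)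
    (p1 : Fin N1 → ℝ) (ν1 : Fin N1 → X) (h0 : IsProbVec p0) (h1 : IsProbVec p1) :
    0 ≤ sInf (costSet p0 ν0 p1 ν1) := by
  refine le_csInf (costSet_nonempty ν0 ν1 h0 h1) fun c hc => ?_
  obtain ⟨π, hπ, rfl⟩ := hc
  exact cost_nonneg hπ.1 ν0 ν1

lemma sqrt_add_le {x y : ℝ} (hx : 0 ≤ x) (hy : 0 ≤ y) :
    Real.sqrt (x + y) ≤ Real.sqrt x + Real.sqrt y := by
  rw [show x + y = x + y from rfl]
  have h : x + y ≤ (Real.sqrt x + Real.sqrt y) ^ 2 := by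
    have := Real.sq_sqrt hx
    have := Real.sq_sqrt hy
    nlinarith [Real.sqrt_nonneg x, Real.sqrt_nonneg y]
  calc Real.sqrt (x + y) ≤ Real.sqrt ((Real.sqrt x + Real.sqrt y) ^ 2) :=
        Real.sqrt_le_sqrt h
    _ = Real.sqrt x + Real.sqrt y :=
        Real.sqrt_sq (by positivity)

/-- The gluing / key lemma: given couplings `π01` and `π12`, the infimal cost
between `μ0` and `μ2` satisfies the squared triangle inequality. -/
lemma key {N0 N1 N2 : ℕ} (p0 : Fin N0 → ℝ) (ν0 : Fin N0 → X)
    (p1 : Fin N1 → ℝ) (ν1 : Fin N1 → X) (p2 : Fin N2 → ℝ) (ν2 : Fin N2 → X)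
    (h1 : IsProbVec p1)
    (π01 : Fin N0 → Fin N1 → ℝ) (π12 : Fin N1 → Fin N2 → ℝ)
    (h01 : IsCoupling p0 p1 π01) (h12 : IsCoupling p1 p2 π12) :
    Real.sqrt (sInf (costSet p0 ν0 p2 ν2)) ≤
      Real.sqrt (cost π01 ν0 ν1) + Real.sqrt (cost π12 ν1 ν2) := by
  obtain ⟨h01n, h01r, h01c⟩ := h01
  obtain ⟨h12n, h12r, h12c⟩ := h12
  set w : Fin N0 → Fin N1 → Fin N2 → ℝ :=
    fun i j k => if p1 j = 0 then 0 else π01 i j * π12 j k / p1 j with hw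
  have hwnn : ∀ i j k, 0 ≤ w i j k := by
    intro i j k
    simp only [hw]
    split
    · exact le_rfl
    · exact div_nonneg (mul_nonneg (h01n i j) (h12n j k)) (h1.1 j)
  have hπ01_zero : ∀ i j, p1 j = 0 → π01 i j = 0 := by
    intro i j hj
    have hsum : ∑ i', π01 i' j = 0 := by rw [h01c j, hj]
    have := (Finset.sum_eq_zero_iff_of_nonneg (fun i' _ => h01n i' j)).mp hsum
    exact this i (Finset.mem_univ i)
  have hπ12_zero : ∀ j k, p1 j = 0 → π12 j k = 0 := by
    intro j k hj
    have hsum : ∑ k', π12 j k' = 0 := by rw [h12r j, hj]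
    have := (Finset.sum_eq_zero_iff_of_nonneg (fun k' _ => h12n j k')).mp hsum
    exact this k (Finset.mem_univ k)
  have hsum_k : ∀ i j, ∑ k, w i j k = π01 i j := by
    intro i j
    by_cases hj : p1 j = 0
    · simp [hw, hj, hπ01_zero i j hj]
    · simp only [hw, if_neg hj]
      rw [show (fun k => π01 i j * π12 j k / p1 j) = fun k => (π01 i j / p1 j) * π12 j k from
        funext fun k => by ring]
      rw [← Finset.mul_sum, h12r j]
      field_simp
  have hsum_i : ∀ j k, ∑ i, w i j k = π12 j k := by
    intro j k
    by_cases hj : p1 j = 0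
    · simp [hw, hj, hπ12_zero j k hj]
    · simp only [hw, if_neg hj]
      rw [show (fun i => π01 i j * π12 j k / p1 j) = fun i => π01 i j * (π12 j k / p1 j) from
        funext fun i => by ring]
      rw [← Finset.sum_mul, h01c j]
      field_simp
  set π02 : Fin N0 → Fin N2 → ℝ := fun i k => ∑ j, w i j k with hπ02
  have hcoup : IsCoupling p0 p2 π02 := by
    refine ⟨fun i k => Finset.sum_nonneg fun j _ => hwnn i j k, ?_, ?_⟩
    · intro i
      rw [hπ02]
      rw [Finset.sum_comm]
      simp_rw [hsum_k]
      exact h01r i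
    · intro k
      rw [hπ02]
      rw [Finset.sum_comm]
      simp_rw [hsum_i]
      exact h12c k
  -- notation for distances
  set A := cost π01 ν0 ν1 with hA
  set C := cost π12 ν1 ν2 with hC
  have hAnn : 0 ≤ A := cost_nonneg h01n ν0 ν1
  have hCnn : 0 ≤ C := cost_nonneg h12n ν1 ν2
  -- cross term
  set B : ℝ := ∑ i, ∑ j, ∑ k, w i j k * (dist (ν0 i) (ν1 j) * dist (ν1 j) (ν2 k)) with hB
  have hBnn : 0 ≤ B := Finset.sum_nonneg fun i _ => Finset.sum_nonneg fun j _ =>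
    Finset.sum_nonneg fun k _ => mul_nonneg (hwnn i j k)
      (mul_nonneg dist_nonneg dist_nonneg)
  have T1 : ∑ i, ∑ j, ∑ k, w i j k * dist (ν0 i) (ν1 j) ^ 2 = A := by
    rw [hA, cost]
    refine Finset.sum_congr rfl fun i _ => Finset.sum_congr rfl fun j _ => ?_
    rw [← Finset.sum_mul, hsum_k]
  have T2 : ∑ i, ∑ j, ∑ k, w i j k * dist (ν1 j) (ν2 k) ^ 2 = C := by
    rw [hC, cost]
    rw [show (∑ i, ∑ j, ∑ k, w i j k * dist (ν1 j) (ν2 k) ^ 2)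
        = ∑ j, ∑ i, ∑ k, w i j k * dist (ν1 j) (ν2 k) ^ 2 from Finset.sum_comm]
    refine Finset.sum_congr rfl fun j _ => ?_
    rw [show (∑ i, ∑ k, w i j k * dist (ν1 j) (ν2 k) ^ 2)
        = ∑ k, ∑ i, w i j k * dist (ν1 j) (ν2 k) ^ 2 from Finset.sum_comm]
    refine Finset.sum_congr rfl fun k _ => ?_
    rw [← Finset.sum_mul, hsum_i]
  have hB_le : B ≤ Real.sqrt A * Real.sqrt C := by
    have hBsq : B ^ 2 ≤ A * C := by
      have CS := Finset.sum_mul_sq_le_sq_mul_sq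
        (Finset.univ : Finset (Fin N0 × Fin N1 × Fin N2))
        (fun t => Real.sqrt (w t.1 t.2.1 t.2.2) * dist (ν0 t.1) (ν1 t.2.1))
        (fun t => Real.sqrt (w t.1 t.2.1 t.2.2) * dist (ν1 t.2.1) (ν2 t.2.2))
      simp only [Fintype.sum_prod_type] at CS
      have hcross : ∀ (i : Fin N0) (j : Fin N1) (k : Fin N2),
          (Real.sqrt (w i j k) * dist (ν0 i) (ν1 j)) *
            (Real.sqrt (w i j k) * dist (ν1 j) (ν2 k))
          = w i j k * (dist (ν0 i) (ν1 j) * dist (ν1 j) (ν2 k)) := fun i j k => by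
        have h := Real.mul_self_sqrt (hwnn i j k)
        linear_combination dist (ν0 i) (ν1 j) * dist (ν1 j) (ν2 k) * h
      have hsq1 : ∀ (i : Fin N0) (j : Fin N1) (k : Fin N2),
          (Real.sqrt (w i j k) * dist (ν0 i) (ν1 j)) ^ 2
          = w i j k * dist (ν0 i) (ν1 j) ^ 2 := fun i j k => by
        rw [mul_pow, Real.sq_sqrt (hwnn i j k)]
      have hsq2 : ∀ (i : Fin N0) (j : Fin N1) (k : Fin N2),
          (Real.sqrt (w i j k) * dist (ν1 j) (ν2 k)) ^ 2
          = w i j k * dist (ν1 j) (ν2 k) ^ 2 := fun i j k => by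
        rw [mul_pow, Real.sq_sqrt (hwnn i j k)]
      simp_rw [hcross, hsq1, hsq2] at CS
      rw [T1, T2, ← hB] at CS
      exact CS
    calc B = Real.sqrt (B ^ 2) := (Real.sqrt_sq hBnn).symm
      _ ≤ Real.sqrt (A * C) := Real.sqrt_le_sqrt hBsq
      _ = Real.sqrt A * Real.sqrt C := Real.sqrt_mul hAnn _
  -- cost bound for the glued coupling
  have hcost02 : cost π02 ν0 ν2 ≤ A + 2 * B + C := by
    have step1 : cost π02 ν0 ν2 = ∑ i, ∑ j, ∑ k, w i j k * dist (ν0 i) (ν2 k) ^ 2 := by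
      rw [cost]
      refine Finset.sum_congr rfl fun i _ => ?_
      simp only [hπ02]
      simp_rw [Finset.sum_mul]
      exact Finset.sum_comm
    have step2 : ∑ i, ∑ j, ∑ k, w i j k * dist (ν0 i) (ν2 k) ^ 2 ≤
        ∑ i, ∑ j, ∑ k, w i j k * (dist (ν0 i) (ν1 j) + dist (ν1 j) (ν2 k)) ^ 2 := by
      refine Finset.sum_le_sum fun i _ => Finset.sum_le_sum fun j _ =>
        Finset.sum_le_sum fun k _ => ?_
      refine mul_le_mul_of_nonneg_left ?_ (hwnn i j k)
      exact pow_le_pow_left₀ dist_nonneg (dist_triangle _ _ _) 2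
    have expand : ∀ i j k, w i j k * (dist (ν0 i) (ν1 j) + dist (ν1 j) (ν2 k)) ^ 2
        = w i j k * dist (ν0 i) (ν1 j) ^ 2
          + 2 * (w i j k * (dist (ν0 i) (ν1 j) * dist (ν1 j) (ν2 k)))
          + w i j k * dist (ν1 j) (ν2 k) ^ 2 := fun i j k => by ring
    have step3 : ∑ i, ∑ j, ∑ k, w i j k * (dist (ν0 i) (ν1 j) + dist (ν1 j) (ν2 k)) ^ 2
        = A + 2 * B + C := by
      simp_rw [expand, Finset.sum_add_distrib, ← Finset.mul_sum]
      rw [T1, T2, hB]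
    calc cost π02 ν0 ν2
        = ∑ i, ∑ j, ∑ k, w i j k * dist (ν0 i) (ν2 k) ^ 2 := step1
      _ ≤ ∑ i, ∑ j, ∑ k, w i j k * (dist (ν0 i) (ν1 j) + dist (ν1 j) (ν2 k)) ^ 2 := step2
      _ = A + 2 * B + C := step3
  have hmem : cost π02 ν0 ν2 ∈ costSet p0 ν0 p2 ν2 := ⟨π02, hcoup, rfl⟩
  have hinf : sInf (costSet p0 ν0 p2 ν2) ≤ cost π02 ν0 ν2 :=
    csInf_le (costSet_bddBelow p0 ν0 p2 ν2) hmem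
  have hsq : A + 2 * B + C ≤ (Real.sqrt A + Real.sqrt C) ^ 2 := by
    have hA2 := Real.sq_sqrt hAnn
    have hC2 := Real.sq_sqrt hCnn
    nlinarith [hB_le]
  calc Real.sqrt (sInf (costSet p0 ν0 p2 ν2))
      ≤ Real.sqrt (cost π02 ν0 ν2) := Real.sqrt_le_sqrt hinf
    _ ≤ Real.sqrt ((Real.sqrt A + Real.sqrt C) ^ 2) :=
        Real.sqrt_le_sqrt (le_trans hcost02 hsq)
    _ = Real.sqrt A + Real.sqrt C := Real.sqrt_sq (by positivity)

end DiscAux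

/-- Triangle inequality for the discrete transport distance. -/
theorem discDist_triangle {X : Type*} [MetricSpace X] {N0 N1 N2 : ℕ}
    (p0 : Fin N0 → ℝ) (ν0 : Fin N0 → X)
    (p1 : Fin N1 → ℝ) (ν1 : Fin N1 → X)
    (p2 : Fin N2 → ℝ) (ν2 : Fin N2 → X)
    (h0 : IsProbVec p0) (h1 : IsProbVec p1) (h2 : IsProbVec p2) :
    discDist p0 ν0 p2 ν2 ≤ discDist p0 ν0 p1 ν1 + discDist p1 ν1 p2 ν2 := by
  open DiscAux in
  rw [discDist_eq, discDist_eq, discDist_eq]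
  refine le_of_forall_pos_le_add fun ε hε => ?_
  have hδ : (0:ℝ) < (ε / 2) ^ 2 := by positivity
  obtain ⟨c01, hc01mem, hc01lt⟩ :=
    Real.lt_sInf_add_pos (costSet_nonempty ν0 ν1 h0 h1) hδ
  obtain ⟨c12, hc12mem, hc12lt⟩ :=
    Real.lt_sInf_add_pos (costSet_nonempty ν1 ν2 h1 h2) hδ
  obtain ⟨π01, hπ01, rfl⟩ := hc01mem
  obtain ⟨π12, hπ12, rfl⟩ := hc12mem
  have hkey := key p0 ν0 p1 ν1 p2 ν2 h1 π01 π12 hπ01 hπ12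
  have h01nn := sInf_costSet_nonneg p0 ν0 p1 ν1 h0 h1
  have h12nn := sInf_costSet_nonneg p1 ν1 p2 ν2 h1 h2
  have e1 : Real.sqrt (cost π01 ν0 ν1)
      ≤ Real.sqrt (sInf (costSet p0 ν0 p1 ν1)) + ε / 2 := by
    calc Real.sqrt (cost π01 ν0 ν1)
        ≤ Real.sqrt (sInf (costSet p0 ν0 p1 ν1) + (ε / 2) ^ 2) :=
          Real.sqrt_le_sqrt hc01lt.le
      _ ≤ Real.sqrt (sInf (costSet p0 ν0 p1 ν1)) + Real.sqrt ((ε / 2) ^ 2) :=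
          sqrt_add_le h01nn hδ.le
      _ = Real.sqrt (sInf (costSet p0 ν0 p1 ν1)) + ε / 2 := by
          rw [Real.sqrt_sq (by positivity)]
  have e2 : Real.sqrt (cost π12 ν1 ν2)
      ≤ Real.sqrt (sInf (costSet p1 ν1 p2 ν2)) + ε / 2 := by
    calc Real.sqrt (cost π12 ν1 ν2)
        ≤ Real.sqrt (sInf (costSet p1 ν1 p2 ν2) + (ε / 2) ^ 2) :=
          Real.sqrt_le_sqrt hc12lt.le
      _ ≤ Real.sqrt (sInf (costSet p1 ν1 p2 ν2)) + Real.sqrt ((ε / 2) ^ 2) :=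
          sqrt_add_le h12nn hδ.le
      _ = Real.sqrt (sInf (costSet p1 ν1 p2 ν2)) + ε / 2 := by
          rw [Real.sqrt_sq (by positivity)]
  linarith
end

section
/- Identity of indiscernibles: let (X, dist) be a metric space equipped with its Borel σ-algebra. For discrete measures μ0 = (p0, ν0) and μ1 = (p1, ν1) on X, d(μ0, μ1) = 0 if and only if the associated Borel measures coincide, i.e. Σ_i p0 i • δ_{ν0 i} = Σ_j p1 j • δ_{ν1 j} as measures on X, where δ_x denotes the Dirac measure at x. -/
open Finset MeasureTheory

open scoped Classical

lemma measApplySingleton {X : Type*} [MetricSpace X] [MeasurableSpace X] [BorelSpace X]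
    {N : ℕ} (p : Fin N → ℝ) (hp : ∀ i, 0 ≤ p i) (ν : Fin N → X) (x : X) :
    (∑ i, ENNReal.ofReal (p i) • Measure.dirac (ν i)) {x}
      = ENNReal.ofReal (∑ i ∈ univ.filter (fun i => ν i = x), p i) := by
  rw [Measure.finset_sum_apply]
  rw [ENNReal.ofReal_sum_of_nonneg (fun i _ => hp i), Finset.sum_filter]
  congr 1
  ext i
  rw [Measure.smul_apply, Measure.dirac_apply, smul_eq_mul, Set.indicator_apply]
  simp only [Set.mem_singleton_iff, Pi.one_apply]
  split <;> simp

lemma measRegroup {X : Type*} [MetricSpace X] [MeasurableSpace X] [BorelSpace X]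
    {N : ℕ} (p : Fin N → ℝ) (hp : ∀ i, 0 ≤ p i) (ν : Fin N → X) (T : Finset X)
    (hT : ∀ i, ν i ∈ T) :
    (∑ i, ENNReal.ofReal (p i) • Measure.dirac (ν i))
      = ∑ x ∈ T, ENNReal.ofReal (∑ i ∈ univ.filter (fun i => ν i = x), p i) • Measure.dirac x := by
  rw [← Finset.sum_fiberwise_of_maps_to (fun i _ => hT i)
    (fun i => ENNReal.ofReal (p i) • Measure.dirac (ν i))]
  refine Finset.sum_congr rfl fun x _ => ?_
  rw [ENNReal.ofReal_sum_of_nonneg (fun i _ => hp i), Finset.sum_smul]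
  refine Finset.sum_congr rfl fun i hi => ?_
  rw [Finset.mem_filter] at hi
  rw [hi.2]

/-- Identity of indiscernibles: the discrete transport distance vanishes exactly when
the two associated Borel measures (mixtures of Dirac measures) coincide. -/
theorem discDist_eq_zero_iff {X : Type*} [MetricSpace X] [MeasurableSpace X] [BorelSpace X]
    {N0 N1 : ℕ}
    (p0 : Fin N0 → ℝ) (ν0 : Fin N0 → X)
    (p1 : Fin N1 → ℝ) (ν1 : Fin N1 → X)
    (h0 : IsProbVec p0) (h1 : IsProbVec p1) :
    discDist p0 ν0 p1 ν1 = 0 ↔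
      (∑ i, ENNReal.ofReal (p0 i) • Measure.dirac (ν0 i)) =
        ∑ j, ENNReal.ofReal (p1 j) • Measure.dirac (ν1 j) := by
  classical
  obtain ⟨hp0, hs0⟩ := h0
  obtain ⟨hp1, hs1⟩ := h1
  set S : Set ℝ := {c : ℝ | ∃ π : Fin N0 → Fin N1 → ℝ, IsCoupling p0 p1 π ∧
    c = ∑ i, ∑ j, π i j * dist (ν0 i) (ν1 j) ^ 2} with hSdef
  have hSnonneg : ∀ c ∈ S, (0:ℝ) ≤ c := by
    rintro c ⟨π, ⟨hπ, -, -⟩, rfl⟩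
    exact Finset.sum_nonneg fun i _ => Finset.sum_nonneg fun j _ =>
      mul_nonneg (hπ i j) (sq_nonneg _)
  have hbdd : BddBelow S := ⟨0, fun c hc => hSnonneg c hc⟩
  have hprod : IsCoupling p0 p1 (fun i j => p0 i * p1 j) := by
    refine ⟨fun i j => mul_nonneg (hp0 i) (hp1 j), ?_, ?_⟩
    · intro i; rw [← Finset.mul_sum, hs1, mul_one]
    · intro j; rw [← Finset.sum_mul, hs0, one_mul]
  have hne : S.Nonempty :=
    ⟨∑ i, ∑ j, (p0 i * p1 j) * dist (ν0 i) (ν1 j) ^ 2, fun i j => p0 i * p1 j, hprod, rfl⟩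
  -- pointwise masses
  constructor
  · -- forward: distance zero implies measures coincide
    intro hd
    have hd' : Real.sqrt (sInf S) = 0 := hd
    have hinf0 : sInf S = 0 :=
      le_antisymm (Real.sqrt_eq_zero'.mp hd') (le_csInf hne hSnonneg)
    have key : ∀ x : X, (∑ i ∈ univ.filter (fun i => ν0 i = x), p0 i)
        = ∑ j ∈ univ.filter (fun j => ν1 j = x), p1 j := by
      intro x
      set A : Finset (Fin N0) := univ.filter (fun i => ν0 i = x) with hA
      set B : Finset (Fin N1) := univ.filter (fun j => ν1 j = x) with hB
      set D : Finset (Fin N0 × Fin N1) := univ.filter (fun q => ν0 q.1 ≠ ν1 q.2) with hD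
      have hcoup : ∀ π : Fin N0 → Fin N1 → ℝ, IsCoupling p0 p1 π →
          |(∑ i ∈ A, p0 i) - ∑ j ∈ B, p1 j| ≤ ∑ q ∈ D, π q.1 q.2 := by
        rintro π ⟨hπ, hrow, hcol⟩
        have e0 : (∑ i ∈ A, p0 i)
            = ∑ q ∈ A ×ˢ B, π q.1 q.2 + ∑ q ∈ A ×ˢ Bᶜ, π q.1 q.2 := by
          rw [Finset.sum_product, Finset.sum_product, ← Finset.sum_add_distrib]
          refine Finset.sum_congr rfl fun i _ => ?_
          rw [Finset.sum_add_sum_compl, hrow i]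
        have e1 : (∑ j ∈ B, p1 j)
            = ∑ q ∈ A ×ˢ B, π q.1 q.2 + ∑ q ∈ Aᶜ ×ˢ B, π q.1 q.2 := by
          rw [Finset.sum_product, Finset.sum_product, Finset.sum_comm (s := A),
            Finset.sum_comm (s := Aᶜ), ← Finset.sum_add_distrib]
          refine Finset.sum_congr rfl fun j _ => ?_
          rw [Finset.sum_add_sum_compl, hcol j]
        have hsub1 : A ×ˢ Bᶜ ⊆ D := by
          intro q hq
          rw [Finset.mem_product] at hq
          rw [hD, Finset.mem_filter]
          refine ⟨Finset.mem_univ _, ?_⟩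
          have h1' : ν0 q.1 = x := (Finset.mem_filter.mp hq.1).2
          have h2' : ¬ ν1 q.2 = x := by
            have := Finset.mem_compl.mp hq.2
            simpa [hB, Finset.mem_filter] using this
          rw [h1']; exact fun h => h2' h.symm
        have hsub2 : Aᶜ ×ˢ B ⊆ D := by
          intro q hq
          rw [Finset.mem_product] at hq
          rw [hD, Finset.mem_filter]
          refine ⟨Finset.mem_univ _, ?_⟩
          have h1' : ¬ ν0 q.1 = x := by
            have := Finset.mem_compl.mp hq.1
            simpa [hA, Finset.mem_filter] using this
          have h2' : ν1 q.2 = x := (Finset.mem_filter.mp hq.2).2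
          rw [h2']; exact h1'
        have hb1 : ∑ q ∈ A ×ˢ Bᶜ, π q.1 q.2 ≤ ∑ q ∈ D, π q.1 q.2 :=
          Finset.sum_le_sum_of_subset_of_nonneg hsub1 (fun q _ _ => hπ q.1 q.2)
        have hb2 : ∑ q ∈ Aᶜ ×ˢ B, π q.1 q.2 ≤ ∑ q ∈ D, π q.1 q.2 :=
          Finset.sum_le_sum_of_subset_of_nonneg hsub2 (fun q _ _ => hπ q.1 q.2)
        have hn1 : (0:ℝ) ≤ ∑ q ∈ A ×ˢ Bᶜ, π q.1 q.2 :=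
          Finset.sum_nonneg fun q _ => hπ q.1 q.2
        have hn2 : (0:ℝ) ≤ ∑ q ∈ Aᶜ ×ˢ B, π q.1 q.2 :=
          Finset.sum_nonneg fun q _ => hπ q.1 q.2
        rw [abs_sub_le_iff]
        constructor <;> linarith
      by_cases hDne : D.Nonempty
      · set δ : ℝ := D.inf' hDne (fun q => dist (ν0 q.1) (ν1 q.2) ^ 2) with hδ
        have hδpos : 0 < δ := by
          rw [hδ, Finset.lt_inf'_iff]
          intro q hq
          have hne' : ν0 q.1 ≠ ν1 q.2 := by
            have := (Finset.mem_filter.mp hq).2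
            exact this
          have := dist_pos.mpr hne'
          positivity
        have hlb : ∀ c ∈ S, |(∑ i ∈ A, p0 i) - ∑ j ∈ B, p1 j| * δ ≤ c := by
          rintro c ⟨π, hπc, rfl⟩
          have h1' := hcoup π hπc
          have h2' : (∑ q ∈ D, π q.1 q.2) * δ
              ≤ ∑ i, ∑ j, π i j * dist (ν0 i) (ν1 j) ^ 2 := by
            rw [Finset.sum_mul]
            calc ∑ q ∈ D, π q.1 q.2 * δ
                ≤ ∑ q ∈ D, π q.1 q.2 * dist (ν0 q.1) (ν1 q.2) ^ 2 :=
                  Finset.sum_le_sum fun q hq =>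
                    mul_le_mul_of_nonneg_left (Finset.inf'_le _ hq) (hπc.1 q.1 q.2)
              _ ≤ ∑ q : Fin N0 × Fin N1, π q.1 q.2 * dist (ν0 q.1) (ν1 q.2) ^ 2 :=
                  Finset.sum_le_sum_of_subset_of_nonneg (Finset.subset_univ D)
                    (fun q _ _ => mul_nonneg (hπc.1 q.1 q.2) (sq_nonneg _))
              _ = _ := Fintype.sum_prod_type _
          have := mul_le_mul_of_nonneg_right h1' (le_of_lt hδpos)
          linarith
        have hle0 : |(∑ i ∈ A, p0 i) - ∑ j ∈ B, p1 j| * δ ≤ 0 := by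
          have := le_csInf hne hlb
          rw [hinf0] at this
          exact this
        have habs : |(∑ i ∈ A, p0 i) - ∑ j ∈ B, p1 j| = 0 := by
          nlinarith [abs_nonneg ((∑ i ∈ A, p0 i) - ∑ j ∈ B, p1 j)]
        exact sub_eq_zero.mp (abs_eq_zero.mp habs)
      · rw [Finset.not_nonempty_iff_eq_empty] at hDne
        have := hcoup (fun i j => p0 i * p1 j) hprod
        rw [hDne, Finset.sum_empty] at this
        have habs := le_antisymm this (abs_nonneg _)
        exact sub_eq_zero.mp (abs_eq_zero.mp habs)
    -- conclude measure equality
    set T : Finset X := univ.image ν0 ∪ univ.image ν1 with hT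
    have hT0 : ∀ i, ν0 i ∈ T := fun i =>
      Finset.mem_union_left _ (Finset.mem_image_of_mem _ (Finset.mem_univ i))
    have hT1 : ∀ j, ν1 j ∈ T := fun j =>
      Finset.mem_union_right _ (Finset.mem_image_of_mem _ (Finset.mem_univ j))
    rw [measRegroup p0 hp0 ν0 T hT0, measRegroup p1 hp1 ν1 T hT1]
    exact Finset.sum_congr rfl fun x _ => by rw [key x]
  · -- reverse: measures coincide implies distance zero
    intro hmeas
    have key : ∀ x : X, (∑ i ∈ univ.filter (fun i => ν0 i = x), p0 i)
        = ∑ j ∈ univ.filter (fun j => ν1 j = x), p1 j := by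
      intro x
      have h2 := congrArg (fun μ : Measure X => μ {x}) hmeas
      rw [measApplySingleton p0 hp0 ν0 x, measApplySingleton p1 hp1 ν1 x] at h2
      exact (ENNReal.ofReal_eq_ofReal_iff
        (Finset.sum_nonneg fun i _ => hp0 i) (Finset.sum_nonneg fun j _ => hp1 j)).mp h2
    set π : Fin N0 → Fin N1 → ℝ := fun i j =>
      if ν1 j = ν0 i then p0 i * p1 j / (∑ k ∈ univ.filter (fun k => ν0 k = ν0 i), p0 k)
      else 0 with hπdef
    have hMnonneg : ∀ i, (0:ℝ) ≤ ∑ k ∈ univ.filter (fun k => ν0 k = ν0 i), p0 k :=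
      fun i => Finset.sum_nonneg fun k _ => hp0 k
    have hp0le : ∀ i, p0 i ≤ ∑ k ∈ univ.filter (fun k => ν0 k = ν0 i), p0 k := by
      intro i
      exact Finset.single_le_sum (fun k _ => hp0 k)
        (Finset.mem_filter.mpr ⟨Finset.mem_univ i, rfl⟩)
    have hcoupπ : IsCoupling p0 p1 π := by
      refine ⟨?_, ?_, ?_⟩
      · intro i j
        rw [hπdef]
        dsimp only
        split
        · exact div_nonneg (mul_nonneg (hp0 i) (hp1 j)) (hMnonneg i)
        · exact le_refl 0
      · intro i
        rw [hπdef]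
        dsimp only
        rw [← Finset.sum_filter]
        rw [← Finset.sum_div, ← Finset.mul_sum]
        have : (∑ j ∈ univ.filter (fun j => ν1 j = ν0 i), p1 j)
            = ∑ k ∈ univ.filter (fun k => ν0 k = ν0 i), p0 k := (key (ν0 i)).symm
        rw [this]
        by_cases hM : (∑ k ∈ univ.filter (fun k => ν0 k = ν0 i), p0 k) = 0
        · have hpi : p0 i = 0 := le_antisymm (hM ▸ hp0le i) (hp0 i)
          rw [hM, hpi]
          simp
        · rw [mul_div_assoc, div_self hM, mul_one]
      · intro j
        rw [hπdef]
        dsimp only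
        rw [← Finset.sum_filter]
        have hcong : ∀ i ∈ univ.filter (fun i => ν1 j = ν0 i),
            p0 i * p1 j / (∑ k ∈ univ.filter (fun k => ν0 k = ν0 i), p0 k)
              = p0 i * p1 j / (∑ k ∈ univ.filter (fun k => ν0 k = ν1 j), p0 k) := by
          intro i hi
          have : ν1 j = ν0 i := (Finset.mem_filter.mp hi).2
          rw [← this]
        rw [Finset.sum_congr rfl hcong, ← Finset.sum_div, ← Finset.sum_mul]
        have hfil : (∑ i ∈ univ.filter (fun i => ν1 j = ν0 i), p0 i)
            = ∑ k ∈ univ.filter (fun k => ν0 k = ν1 j), p0 k := by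
          apply Finset.sum_congr _ (fun _ _ => rfl)
          apply Finset.filter_congr
          intro k _
          exact eq_comm
        rw [hfil]
        by_cases hM : (∑ k ∈ univ.filter (fun k => ν0 k = ν1 j), p0 k) = 0
        · have hle : p1 j ≤ ∑ k ∈ univ.filter (fun k => ν0 k = ν1 j), p0 k := by
            rw [key (ν1 j)]
            exact Finset.single_le_sum (fun l _ => hp1 l)
              (Finset.mem_filter.mpr ⟨Finset.mem_univ j, rfl⟩)
          have hpj : p1 j = 0 := le_antisymm (hM ▸ hle) (hp1 j)
          rw [hM, hpj]
          simp
        · rw [mul_comm, mul_div_assoc, div_self hM, mul_one]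
    have hcost : (∑ i, ∑ j, π i j * dist (ν0 i) (ν1 j) ^ 2) = 0 := by
      refine Finset.sum_eq_zero fun i _ => Finset.sum_eq_zero fun j _ => ?_
      by_cases h : ν1 j = ν0 i
      · rw [h, dist_self]
        ring
      · rw [hπdef]
        dsimp only
        rw [if_neg h, zero_mul]
    have h0mem : (0:ℝ) ∈ S := ⟨π, hcoupπ, hcost.symm⟩
    have hinf0 : sInf S = 0 := le_antisymm (csInf_le hbdd h0mem) (le_csInf hne hSnonneg)
    show Real.sqrt (sInf S) = 0
    rw [hinf0, Real.sqrt_zero]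
end

section
/- The distance d dominates the Wasserstein transport cost of the mixtures: let ν0 : Fin N0 → Measure(ℝⁿ) and ν1 : Fin N1 → Measure(ℝⁿ) be families of Borel probability measures and p0, p1 probability vectors. For each (i,j) let c(i,j) denote the infimum of ∫ ‖x−y‖² dγ(x,y) over all couplings γ of ν0 i and ν1 j. Then the infimum of ∫ ‖x−y‖² dΓ(x,y) over all couplings Γ of the mixtures Σ_i p0 i • ν0 i and Σ_j p1 j • ν1 j is at most the minimum over couplings π of p0 and p1 of Σ_{i,j} π(i,j)·c(i,j). -/
open Finset MeasureTheory ENNReal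

/-- A coupling of two Borel probability measures on `ℝⁿ`. -/
def IsMeasCoupling {n : ℕ} (μ0 μ1 : Measure (EuclideanSpace ℝ (Fin n)))
    (γ : Measure (EuclideanSpace ℝ (Fin n) × EuclideanSpace ℝ (Fin n))) : Prop :=
  IsProbabilityMeasure γ ∧ γ.map Prod.fst = μ0 ∧ γ.map Prod.snd = μ1

/-- The (squared) Wasserstein transport cost between two probability measures on `ℝⁿ`:
the infimum over couplings of the integral of the squared Euclidean distance. -/
noncomputable def W2sq {n : ℕ} (μ0 μ1 : Measure (EuclideanSpace ℝ (Fin n))) : ℝ≥0∞ :=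
  ⨅ (γ : Measure (EuclideanSpace ℝ (Fin n) × EuclideanSpace ℝ (Fin n)))
    (_ : IsMeasCoupling μ0 μ1 γ), ∫⁻ x, ENNReal.ofReal (‖x.1 - x.2‖ ^ 2) ∂γ

lemma map_finset_sum' {α β ι : Type*} [MeasurableSpace α] [MeasurableSpace β]
    {f : α → β} (hf : Measurable f) (s : Finset ι) (μ : ι → Measure α) :
    (∑ i ∈ s, μ i).map f = ∑ i ∈ s, (μ i).map f := by
  classical
  induction s using Finset.induction with
  | empty => simp [Measure.map_zero]
  | insert a s h ih => rw [Finset.sum_insert h, Finset.sum_insert h, Measure.map_add _ _ hf, ih]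

lemma W2sq_le_cost {n : ℕ} {μ0 μ1 : Measure (EuclideanSpace ℝ (Fin n))}
    {γ : Measure (EuclideanSpace ℝ (Fin n) × EuclideanSpace ℝ (Fin n))}
    (h : IsMeasCoupling μ0 μ1 γ) :
    W2sq μ0 μ1 ≤ ∫⁻ x, ENNReal.ofReal (‖x.1 - x.2‖ ^ 2) ∂γ :=
  iInf₂_le γ h

lemma coupling_prod {n : ℕ} (μ0 μ1 : Measure (EuclideanSpace ℝ (Fin n)))
    (h0 : IsProbabilityMeasure μ0) (h1 : IsProbabilityMeasure μ1) :
    IsMeasCoupling μ0 μ1 (μ0.prod μ1) := by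
  haveI := h0; haveI := h1
  refine ⟨inferInstance, ?_, ?_⟩
  · rw [Measure.map_fst_prod]; simp
  · rw [Measure.map_snd_prod]; simp


/-- The discrete transport cost between Gaussian-mixture-type measures dominates the
Wasserstein transport cost of the mixtures. -/
theorem W2sq_mixture_le {n : ℕ} {N0 N1 : ℕ}
    (ν0 : Fin N0 → Measure (EuclideanSpace ℝ (Fin n)))
    (ν1 : Fin N1 → Measure (EuclideanSpace ℝ (Fin n)))
    (hν0 : ∀ i, IsProbabilityMeasure (ν0 i)) (hν1 : ∀ j, IsProbabilityMeasure (ν1 j))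
    (p0 : Fin N0 → ℝ) (p1 : Fin N1 → ℝ)
    (hp0 : IsProbVec p0) (hp1 : IsProbVec p1) :
    W2sq (∑ i, ENNReal.ofReal (p0 i) • ν0 i) (∑ j, ENNReal.ofReal (p1 j) • ν1 j) ≤
      sInf {s : ℝ≥0∞ | ∃ π : Fin N0 → Fin N1 → ℝ, IsCoupling p0 p1 π ∧
        s = ∑ i, ∑ j, ENNReal.ofReal (π i j) * W2sq (ν0 i) (ν1 j)} := by
  apply le_sInf
  rintro s ⟨π, ⟨hπ0, hπr, hπc⟩, rfl⟩
  set T := ∑ i, ∑ j, ENNReal.ofReal (π i j) * W2sq (ν0 i) (ν1 j) with hT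
  -- ε-argument
  refine ENNReal.le_of_forall_pos_le_add fun ε hε hTfin => ?_
  -- choose near-optimal couplings
  have hchoice : ∀ i j, ∃ γ, IsMeasCoupling (ν0 i) (ν1 j) γ ∧
      ENNReal.ofReal (π i j) * (∫⁻ x, ENNReal.ofReal (‖x.1 - x.2‖ ^ 2) ∂γ) ≤
        ENNReal.ofReal (π i j) * W2sq (ν0 i) (ν1 j) + ENNReal.ofReal (π i j) * (ε : ℝ≥0∞) := by
    intro i j
    by_cases hfin : W2sq (ν0 i) (ν1 j) = ∞
    · rcases eq_or_lt_of_le (hπ0 i j) with h0 | h0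
      · exact ⟨(ν0 i).prod (ν1 j), coupling_prod _ _ (hν0 i) (hν1 j), by
          simp [← h0]⟩
      · refine ⟨(ν0 i).prod (ν1 j), coupling_prod _ _ (hν0 i) (hν1 j), ?_⟩
        rw [hfin, ENNReal.mul_top (ENNReal.ofReal_pos.mpr h0).ne']
        exact le_top.trans (le_add_right le_rfl)
    · have : W2sq (ν0 i) (ν1 j) < W2sq (ν0 i) (ν1 j) + ε := by
        apply ENNReal.lt_add_right hfin (by exact_mod_cast hε.ne')
      rw [W2sq, iInf_lt_iff] at this
      obtain ⟨γ, hγ⟩ := this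
      rw [iInf_lt_iff] at hγ
      obtain ⟨hγc, hγle⟩ := hγ
      refine ⟨γ, hγc, ?_⟩
      calc ENNReal.ofReal (π i j) * (∫⁻ x, ENNReal.ofReal (‖x.1 - x.2‖ ^ 2) ∂γ)
          ≤ ENNReal.ofReal (π i j) * (W2sq (ν0 i) (ν1 j) + ε) :=
            mul_le_mul_right hγle.le _
        _ = _ := mul_add _ _ _
  choose γ hγc hγle using hchoice
  set Γ : Measure (EuclideanSpace ℝ (Fin n) × EuclideanSpace ℝ (Fin n)) :=
    ∑ i, ∑ j, ENNReal.ofReal (π i j) • γ i j with hΓ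
  have hΓc : IsMeasCoupling (∑ i, ENNReal.ofReal (p0 i) • ν0 i)
      (∑ j, ENNReal.ofReal (p1 j) • ν1 j) Γ := by
    have hmf : Γ.map Prod.fst = ∑ i, ENNReal.ofReal (p0 i) • ν0 i := by
      rw [hΓ, map_finset_sum' measurable_fst]
      refine Finset.sum_congr rfl fun i _ => ?_
      rw [map_finset_sum' measurable_fst]
      have : ∀ j ∈ Finset.univ, (ENNReal.ofReal (π i j) • γ i j).map Prod.fst
          = ENNReal.ofReal (π i j) • ν0 i := by
        intro j _
        rw [Measure.map_smul, (hγc i j).2.1]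
      rw [Finset.sum_congr rfl this, ← Finset.sum_smul, ← ENNReal.ofReal_sum_of_nonneg
        (fun j _ => hπ0 i j), hπr i]
    have hms : Γ.map Prod.snd = ∑ j, ENNReal.ofReal (p1 j) • ν1 j := by
      have step : Γ.map Prod.snd = ∑ i, ∑ j, ENNReal.ofReal (π i j) • ν1 j := by
        rw [hΓ, map_finset_sum' measurable_snd]
        refine Finset.sum_congr rfl fun i _ => ?_
        rw [map_finset_sum' measurable_snd]
        exact Finset.sum_congr rfl fun j _ => by rw [Measure.map_smul, (hγc i j).2.2]
      rw [step, Finset.sum_comm]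
      refine Finset.sum_congr rfl fun j _ => ?_
      rw [← Finset.sum_smul, ← ENNReal.ofReal_sum_of_nonneg (fun i _ => hπ0 i j), hπc j]
    refine ⟨?_, hmf, hms⟩
    constructor
    have : Γ Set.univ = ∑ i, ∑ j, ENNReal.ofReal (π i j) := by
      rw [hΓ]
      simp only [Measure.finset_sum_apply, Measure.smul_apply, smul_eq_mul]
      refine Finset.sum_congr rfl fun i _ => Finset.sum_congr rfl fun j _ => ?_
      haveI := (hγc i j).1
      simp
    rw [this]
    have : ∀ i ∈ Finset.univ, ∑ j, ENNReal.ofReal (π i j) = ENNReal.ofReal (p0 i) := fun i _ => by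
      rw [← ENNReal.ofReal_sum_of_nonneg (fun j _ => hπ0 i j), hπr i]
    rw [Finset.sum_congr rfl this, ← ENNReal.ofReal_sum_of_nonneg (fun i _ => hp0.1 i), hp0.2,
      ENNReal.ofReal_one]
  calc W2sq _ _ ≤ ∫⁻ x, ENNReal.ofReal (‖x.1 - x.2‖ ^ 2) ∂Γ := W2sq_le_cost hΓc
    _ = ∑ i, ∑ j, ENNReal.ofReal (π i j) * ∫⁻ x, ENNReal.ofReal (‖x.1 - x.2‖ ^ 2) ∂(γ i j) := by
        rw [hΓ, lintegral_finset_sum_measure]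
        refine Finset.sum_congr rfl fun i _ => ?_
        rw [lintegral_finset_sum_measure]
        exact Finset.sum_congr rfl fun j _ => lintegral_smul_measure _ _
    _ ≤ ∑ i, ∑ j, (ENNReal.ofReal (π i j) * W2sq (ν0 i) (ν1 j)
          + ENNReal.ofReal (π i j) * (ε : ℝ≥0∞)) :=
        Finset.sum_le_sum fun i _ => Finset.sum_le_sum fun j _ => hγle i j
    _ = T + ε := by
        simp only [Finset.sum_add_distrib, ← hT]
        congr 1
        have : ∀ i ∈ Finset.univ, ∑ j, ENNReal.ofReal (π i j) * (ε : ℝ≥0∞)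
            = ENNReal.ofReal (p0 i) * ε := fun i _ => by
          rw [← Finset.sum_mul, ← ENNReal.ofReal_sum_of_nonneg (fun j _ => hπ0 i j), hπr i]
        rw [Finset.sum_congr rfl this, ← Finset.sum_mul,
          ← ENNReal.ofReal_sum_of_nonneg (fun i _ => hp0.1 i), hp0.2, ENNReal.ofReal_one, one_mul]
end

section
/- The SDP maximizer in closed form: let Σ0, Σ1 be n×n real positive semidefinite matrices with Σ0 positive definite, and set S* = Σ0^{1/2} (Σ0^{1/2} Σ1 Σ0^{1/2})^{1/2} Σ0^{−1/2}. Then the block matrix [[Σ0, S*], [S*ᵀ, Σ1]] is positive semidefinite, trace(S*) = trace((Σ0^{1/2} Σ1 Σ0^{1/2})^{1/2}), and S* is the unique matrix S maximizing trace(S) subject to [[Σ0, S], [Sᵀ, Σ1]] being positive semidefinite. -/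
open Matrix

/-- The unique positive semidefinite square root of a positive semidefinite matrix
(junk value `0` if the matrix is not positive semidefinite). -/
noncomputable def psdSqrt {n : ℕ} (A : Matrix (Fin n) (Fin n) ℝ) : Matrix (Fin n) (Fin n) ℝ :=
  open Classical in
  if hA : A.PosSemidef then
    (hA.1.eigenvectorUnitary : Matrix (Fin n) (Fin n) ℝ) * diagonal (Real.sqrt ∘ hA.1.eigenvalues) *
      (star hA.1.eigenvectorUnitary : Matrix (Fin n) (Fin n) ℝ)
  else 0

noncomputable def Matrix.PosSemidef.sqrt {n : ℕ} {A : Matrix (Fin n) (Fin n) ℝ}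
    (hA : A.PosSemidef) : Matrix (Fin n) (Fin n) ℝ :=
  (hA.1.eigenvectorUnitary : Matrix (Fin n) (Fin n) ℝ) * diagonal (Real.sqrt ∘ hA.1.eigenvalues) *
    (star hA.1.eigenvectorUnitary : Matrix (Fin n) (Fin n) ℝ)

lemma Matrix.PosSemidef.posSemidef_sqrt {n : ℕ} {A : Matrix (Fin n) (Fin n) ℝ}
    (hA : A.PosSemidef) : hA.sqrt.PosSemidef := by
  have hd : (diagonal (Real.sqrt ∘ hA.1.eigenvalues)).PosSemidef :=
    PosSemidef.diagonal (fun i => Real.sqrt_nonneg _)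
  have := hd.mul_mul_conjTranspose_same (hA.1.eigenvectorUnitary : Matrix (Fin n) (Fin n) ℝ)
  rwa [← Matrix.star_eq_conjTranspose] at this

lemma Matrix.PosSemidef.sqrt_mul_self {n : ℕ} {A : Matrix (Fin n) (Fin n) ℝ}
    (hA : A.PosSemidef) : hA.sqrt * hA.sqrt = A := by
  have hVsV : star (hA.1.eigenvectorUnitary : Matrix (Fin n) (Fin n) ℝ) *
      (hA.1.eigenvectorUnitary : Matrix (Fin n) (Fin n) ℝ) = 1 :=
    mem_unitaryGroup_iff'.mp hA.1.eigenvectorUnitary.2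
  have hdd : diagonal (Real.sqrt ∘ hA.1.eigenvalues) * diagonal (Real.sqrt ∘ hA.1.eigenvalues)
      = diagonal (RCLike.ofReal ∘ hA.1.eigenvalues) := by
    rw [diagonal_mul_diagonal]
    congr 1
    funext i
    simp [Real.mul_self_sqrt (hA.eigenvalues_nonneg i)]
  conv_rhs => rw [hA.1.spectral_theorem, Unitary.conjStarAlgAut_apply]
  rw [Matrix.PosSemidef.sqrt, ← hdd]
  set V := (hA.1.eigenvectorUnitary : Matrix (Fin n) (Fin n) ℝ)
  set D := diagonal (Real.sqrt ∘ hA.1.eigenvalues)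
  calc V * D * star V * (V * D * star V) = V * D * (star V * V) * D * star V := by noncomm_ring
    _ = V * (D * D) * star V := by rw [hVsV]; noncomm_ring

section Key
variable {n : ℕ}

lemma key_diag (T : Matrix (Fin n) (Fin n) ℝ) (lam : Fin n → ℝ) (hlam : ∀ i, 0 ≤ lam i)
    (hQ : (fromBlocks (1 : Matrix (Fin n) (Fin n) ℝ) T Tᵀ
      (diagonal lam * diagonal lam)).PosSemidef) :
    (∀ i, T i i ≤ lam i) ∧ ((∀ i, T i i = lam i) → T = diagonal lam) := by
  set Q : Matrix (Fin n ⊕ Fin n) (Fin n ⊕ Fin n) ℝ :=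
    fromBlocks 1 T Tᵀ (diagonal lam * diagonal lam) with hQdef
  have quad : ∀ (i : Fin n) (t : ℝ),
      star (Sum.elim (t • (Pi.single i 1 : Fin n → ℝ)) (Pi.single i (1:ℝ))) ⬝ᵥ
        Q *ᵥ (Sum.elim (t • (Pi.single i 1 : Fin n → ℝ)) (Pi.single i 1)) =
      t^2 + 2*t*(T i i) + (lam i)^2 := by
    intro i t
    simp [hQdef, fromBlocks_mulVec, star_trivial, sumElim_dotProduct_sumElim,
      mulVec_smul, dotProduct_add, dotProduct_smul, smul_dotProduct,
      mulVec_single, dotProduct_single, single_dotProduct, diagonal_mulVec_single,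
      transpose_apply, diagonal_apply_eq]
    ring
  have hle : ∀ i, T i i ≤ lam i := by
    intro i
    have h1 := hQ.dotProduct_mulVec_nonneg (Sum.elim ((-(T i i)) • (Pi.single i 1 : Fin n → ℝ)) (Pi.single i (1:ℝ)))
    rw [quad i (-(T i i))] at h1
    nlinarith [hlam i, h1]
  refine ⟨hle, fun heq => ?_⟩
  have hzero : ∀ i, Q *ᵥ (Sum.elim ((-(lam i)) • (Pi.single i 1 : Fin n → ℝ))
      (Pi.single i (1:ℝ))) = 0 := by
    intro i
    rw [← hQ.dotProduct_mulVec_zero_iff, quad i (-(lam i)), heq i]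
    ring
  ext j i
  have h2 := congrFun (hzero i) (Sum.inl j)
  simp [hQdef, fromBlocks_mulVec, mulVec_smul, mulVec_single, one_mulVec] at h2
  by_cases hji : j = i
  · subst hji; simp [Pi.single_apply] at h2 ⊢; linarith [h2]
  · simp [Pi.single_apply, hji, diagonal_apply_ne _ hji] at h2 ⊢; linarith [h2]

end Key

lemma key_main {n : ℕ} (M T : Matrix (Fin n) (Fin n) ℝ) (hM : M.PosSemidef)
    (hP : (fromBlocks (1 : Matrix (Fin n) (Fin n) ℝ) T Tᵀ M).PosSemidef) :
    T.trace ≤ hM.sqrt.trace ∧ (T.trace = hM.sqrt.trace → T = hM.sqrt) := by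
  set R := hM.sqrt with hRdef
  have hR : R.PosSemidef := hM.posSemidef_sqrt
  have hH : R.IsHermitian := hR.1
  set V : Matrix (Fin n) (Fin n) ℝ := (hH.eigenvectorUnitary : Matrix (Fin n) (Fin n) ℝ)
    with hVdef
  set lam : Fin n → ℝ := hH.eigenvalues with hlamdef
  have hlam : ∀ i, 0 ≤ lam i := hR.eigenvalues_nonneg
  have hcast : (RCLike.ofReal ∘ lam : Fin n → ℝ) = lam := by funext i; simp
  have hVsV : star V * V = 1 := mem_unitaryGroup_iff'.mp hH.eigenvectorUnitary.2
  have hVVs : V * star V = 1 := mem_unitaryGroup_iff.mp hH.eigenvectorUnitary.2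
  have hspec : R = V * diagonal lam * star V := by
    conv_lhs => rw [hH.spectral_theorem, Unitary.conjStarAlgAut_apply]
    rw [hcast]
  have hD : star V * R * V = diagonal lam := by
    have := hH.conjStarAlgAut_star_eigenvectorUnitary
    rw [Unitary.conjStarAlgAut_apply, Unitary.coe_star, star_star] at this
    rwa [hcast] at this
  set T' := star V * T * V with hT'def
  have hT't : T'ᵀ = star V * Tᵀ * V := by
    have hs : star V = Vᵀ := conjTranspose_eq_transpose_of_trivial V
    rw [hT'def, hs, transpose_mul, transpose_mul, transpose_transpose, mul_assoc]
  have hMeq : star V * M * V = diagonal lam * diagonal lam := by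
    have : M = R * R := (hM.sqrt_mul_self).symm
    have h2 : (star V * R * V) * (star V * R * V) = star V * (R * R) * V := by
      rw [show (star V * R * V) * (star V * R * V)
        = star V * R * ((V * star V) * (R * V)) by noncomm_ring, hVVs, Matrix.one_mul]
      noncomm_ring
    rw [this, ← h2, hD]
  have hQ : (fromBlocks (1 : Matrix (Fin n) (Fin n) ℝ) T' T'ᵀ
      (diagonal lam * diagonal lam)).PosSemidef := by
    have h := hP.conjTranspose_mul_mul_same (fromBlocks V 0 0 V)
    have he : (fromBlocks V 0 0 V)ᴴ * (fromBlocks (1 : Matrix (Fin n) (Fin n) ℝ) T Tᵀ M) *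
        (fromBlocks V 0 0 V) =
        fromBlocks 1 T' T'ᵀ (diagonal lam * diagonal lam) := by
      rw [fromBlocks_conjTranspose, fromBlocks_multiply, fromBlocks_multiply]
      simp only [conjTranspose_zero, Matrix.mul_zero, Matrix.zero_mul, Matrix.mul_one,
        Matrix.one_mul, add_zero, zero_add]
      rw [← Matrix.star_eq_conjTranspose V, hVsV, ← hT't, hMeq]
    rwa [he] at h
  obtain ⟨hle, heqd⟩ := key_diag T' lam hlam hQ
  have htrT : T.trace = T'.trace := by
    rw [hT'def, trace_mul_cycle, hVVs, Matrix.one_mul]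
  have htrR : R.trace = ∑ i, lam i := by
    rw [hspec, trace_mul_cycle, hVsV, Matrix.one_mul, trace_diagonal]
  have htrT' : T'.trace = ∑ i, T' i i := rfl
  constructor
  · rw [htrT, htrR, htrT']
    exact Finset.sum_le_sum fun i _ => hle i
  · intro htr
    rw [htrT, htrR, htrT'] at htr
    have hall : ∀ i ∈ Finset.univ, T' i i = lam i :=
      (Finset.sum_eq_sum_iff_of_le (fun i _ => hle i)).mp htr
    have hT'D : T' = diagonal lam := heqd fun i => hall i (Finset.mem_univ i)
    have : V * T' * star V = T := by
      rw [hT'def, ← mul_assoc, ← mul_assoc, hVVs, Matrix.one_mul, mul_assoc, hVVs,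
        Matrix.mul_one]
    rw [← this, hT'D, ← hspec]


/-- The SDP maximizer in closed form: with `Σ₀` positive definite and `Σ₁` positive
semidefinite, `S* = Σ₀^{1/2} (Σ₀^{1/2} Σ₁ Σ₀^{1/2})^{1/2} Σ₀^{−1/2}` makes the block matrix
`[[Σ₀, S*], [S*ᵀ, Σ₁]]` positive semidefinite, achieves
`trace S* = trace((Σ₀^{1/2} Σ₁ Σ₀^{1/2})^{1/2})`, and is the unique maximizer of the trace
over the semidefinite constraint. -/
theorem sdp_maximizer_closed_form {n : ℕ} (Sig0 Sig1 : Matrix (Fin n) (Fin n) ℝ)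
    (h0 : Sig0.PosDef) (h1 : Sig1.PosSemidef) :
    (Matrix.fromBlocks Sig0
        (psdSqrt Sig0 * psdSqrt (psdSqrt Sig0 * Sig1 * psdSqrt Sig0) * (psdSqrt Sig0)⁻¹)
        (psdSqrt Sig0 * psdSqrt (psdSqrt Sig0 * Sig1 * psdSqrt Sig0) * (psdSqrt Sig0)⁻¹)ᵀ
        Sig1).PosSemidef ∧
    (psdSqrt Sig0 * psdSqrt (psdSqrt Sig0 * Sig1 * psdSqrt Sig0) * (psdSqrt Sig0)⁻¹).trace =
      (psdSqrt (psdSqrt Sig0 * Sig1 * psdSqrt Sig0)).trace ∧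
    ∀ S : Matrix (Fin n) (Fin n) ℝ, (Matrix.fromBlocks Sig0 S Sᵀ Sig1).PosSemidef →
      S.trace ≤ (psdSqrt Sig0 * psdSqrt (psdSqrt Sig0 * Sig1 * psdSqrt Sig0) *
          (psdSqrt Sig0)⁻¹).trace ∧
      (S.trace = (psdSqrt Sig0 * psdSqrt (psdSqrt Sig0 * Sig1 * psdSqrt Sig0) *
          (psdSqrt Sig0)⁻¹).trace →
        S = psdSqrt Sig0 * psdSqrt (psdSqrt Sig0 * Sig1 * psdSqrt Sig0) *
          (psdSqrt Sig0)⁻¹) := by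
  have h0s := h0.posSemidef
  have hA0 : psdSqrt Sig0 = h0s.sqrt := by simp only [psdSqrt]; exact dif_pos h0s
  rw [hA0]
  set A := h0s.sqrt with hAdef
  have hAps : A.PosSemidef := h0s.posSemidef_sqrt
  have hAH : Aᴴ = A := hAps.1
  have hAT : Aᵀ = A := by rw [← conjTranspose_eq_transpose_of_trivial, hAH]
  have hAA : A * A = Sig0 := h0s.sqrt_mul_self
  clear_value A
  have detA : IsUnit A.det := by
    have hdd : A.det * A.det = Sig0.det := by rw [← det_mul, hAA]
    have : A.det ≠ 0 := by
      intro h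
      rw [h, mul_zero] at hdd
      exact h0.det_pos.ne' hdd.symm
    exact isUnit_iff_ne_zero.mpr this
  have hAiA : A⁻¹ * A = 1 := nonsing_inv_mul A detA
  have hAAi : A * A⁻¹ = 1 := mul_nonsing_inv A detA
  have hAiH : (A⁻¹)ᴴ = A⁻¹ := by rw [conjTranspose_nonsing_inv, hAH]
  have hAiT : (A⁻¹)ᵀ = A⁻¹ := by rw [← conjTranspose_eq_transpose_of_trivial, hAiH]
  have hM : (A * Sig1 * A).PosSemidef := by
    have := h1.mul_mul_conjTranspose_same A
    rwa [hAH] at this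
  have hR0 : psdSqrt (A * Sig1 * A) = hM.sqrt := by simp only [psdSqrt]; exact dif_pos hM
  rw [hR0]
  set R := hM.sqrt with hRdef
  have hRps : R.PosSemidef := hM.posSemidef_sqrt
  have hRH : Rᴴ = R := hRps.1
  have hRT : Rᵀ = R := by rw [← conjTranspose_eq_transpose_of_trivial, hRH]
  have hRR : R * R = A * Sig1 * A := hM.sqrt_mul_self
  clear_value R
  have hSstarT : (A * R * A⁻¹)ᵀ = A⁻¹ * R * A := by
    rw [transpose_mul, transpose_mul, hAiT, hRT, hAT, Matrix.mul_assoc]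
  have htr2 : (A * R * A⁻¹).trace = R.trace := by
    rw [trace_mul_cycle, hAiA, Matrix.one_mul]
  refine ⟨?_, htr2, ?_⟩
  · have hX := posSemidef_self_mul_conjTranspose (fromBlocks A 0 (A⁻¹ * R) 0 :
      Matrix (Fin n ⊕ Fin n) (Fin n ⊕ Fin n) ℝ)
    have he : (fromBlocks A 0 (A⁻¹ * R) 0 : Matrix (Fin n ⊕ Fin n) (Fin n ⊕ Fin n) ℝ) *
        (fromBlocks A 0 (A⁻¹ * R) 0)ᴴ =
        fromBlocks Sig0 (A * R * A⁻¹) (A * R * A⁻¹)ᵀ Sig1 := by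
      have hb11 : A * Aᴴ = Sig0 := by rw [hAH, hAA]
      have hb12 : A * (A⁻¹ * R)ᴴ = A * R * A⁻¹ := by
        rw [conjTranspose_mul, hRH, hAiH, Matrix.mul_assoc]
      have hb21 : (A⁻¹ * R) * Aᴴ = (A * R * A⁻¹)ᵀ := by rw [hAH, hSstarT]
      have hb22 : (A⁻¹ * R) * (A⁻¹ * R)ᴴ = Sig1 := by
        rw [conjTranspose_mul, hRH, hAiH,
          show A⁻¹ * R * (R * A⁻¹) = A⁻¹ * (R * R) * A⁻¹ by noncomm_ring, hRR,
          show A⁻¹ * (A * Sig1 * A) * A⁻¹ = (A⁻¹ * A) * Sig1 * (A * A⁻¹) by noncomm_ring,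
          hAiA, hAAi, Matrix.one_mul, Matrix.mul_one]
      rw [fromBlocks_conjTranspose, fromBlocks_multiply]
      simp only [conjTranspose_zero, Matrix.mul_zero, Matrix.zero_mul, add_zero, zero_add]
      rw [hb11, hb12, hb21, hb22]
    rwa [he] at hX
  · intro S hS
    set T := A⁻¹ * S * A with hTdef
    have hTt : Tᵀ = A * Sᵀ * A⁻¹ := by
      rw [hTdef, transpose_mul, transpose_mul, hAiT, hAT, Matrix.mul_assoc]
    have hQ : (fromBlocks (1 : Matrix (Fin n) (Fin n) ℝ) T Tᵀ (A * Sig1 * A)).PosSemidef := by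
      have h := hS.conjTranspose_mul_mul_same
        (fromBlocks A⁻¹ 0 0 A : Matrix (Fin n ⊕ Fin n) (Fin n ⊕ Fin n) ℝ)
      have he : (fromBlocks A⁻¹ 0 0 A : Matrix (Fin n ⊕ Fin n) (Fin n ⊕ Fin n) ℝ)ᴴ *
          fromBlocks Sig0 S Sᵀ Sig1 * fromBlocks A⁻¹ 0 0 A =
          fromBlocks 1 T Tᵀ (A * Sig1 * A) := by
        have hb11 : A⁻¹ * Sig0 * A⁻¹ = (1 : Matrix (Fin n) (Fin n) ℝ) := by
          rw [← hAA, show A⁻¹ * (A * A) * A⁻¹ = (A⁻¹ * A) * (A * A⁻¹) by noncomm_ring,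
            hAiA, hAAi, Matrix.one_mul]
        rw [fromBlocks_conjTranspose, fromBlocks_multiply, fromBlocks_multiply]
        simp only [conjTranspose_zero, Matrix.mul_zero, Matrix.zero_mul, add_zero, zero_add,
          hAiH, hAH]
        rw [hb11, ← hTdef, ← hTt]
      rwa [he] at h
    obtain ⟨hle, heq⟩ := key_main (A * Sig1 * A) T hM hQ
    rw [← hRdef] at hle heq
    have htrT : T.trace = S.trace := by
      rw [hTdef, trace_mul_cycle, hAAi, Matrix.one_mul]
    constructor
    · rw [htr2, ← htrT]; exact hle
    · intro hteq
      rw [htr2, ← htrT] at hteq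
      have hTR : T = R := heq hteq
      have : A * T * A⁻¹ = S := by
        rw [hTdef, show A * (A⁻¹ * S * A) * A⁻¹ = (A * A⁻¹) * S * (A * A⁻¹) by noncomm_ring,
          hAAi, Matrix.one_mul, Matrix.mul_one]
      rw [← this, hTR]
end

section
/- Linear-programming reformulation of the fixed-support barycenter problem: let (X, dist) be a metric space, ν : Fin N → X a family of support points, λ : Fin L → ℝ a probability vector, and for each k ∈ Fin L let μ_k = (p_k, ν_k) be a discrete measure on X with p_k : Fin N_k → ℝ. Then the minimum over probability vectors p : Fin N → ℝ of Σ_k λ_k · d((p, ν), μ_k)² equals the minimum, over tuples of nonnegative matrices (π_1, …, π_L) with π_k : Fin N → Fin N_k → ℝ such that for every k and j, Σ_i π_k(i,j) = p_k^j, and for every i the row sums Σ_j π_k(i,j) are equal for all k, of Σ_k λ_k Σ_{i,j} π_k(i,j)·dist(ν i, ν_k j)². -/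
open Finset

/-- The product coupling of two probability vectors. -/
lemma prod_isCoupling {N0 N1 : ℕ} {p0 : Fin N0 → ℝ} {p1 : Fin N1 → ℝ}
    (h0 : IsProbVec p0) (h1 : IsProbVec p1) :
    IsCoupling p0 p1 (fun i j => p0 i * p1 j) := by
  refine ⟨fun i j => mul_nonneg (h0.1 i) (h1.1 j), fun i => ?_, fun j => ?_⟩
  · rw [← Finset.mul_sum, h1.2, mul_one]
  · simp only [← Finset.sum_mul, h0.2, one_mul]

lemma cost_nonneg {X : Type*} [MetricSpace X] {N0 N1 : ℕ}
    (ν0 : Fin N0 → X) (ν1 : Fin N1 → X) {π : Fin N0 → Fin N1 → ℝ}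
    (hπ : ∀ i j, 0 ≤ π i j) :
    0 ≤ ∑ i, ∑ j, π i j * dist (ν0 i) (ν1 j) ^ 2 :=
  Finset.sum_nonneg fun i _ => Finset.sum_nonneg fun j _ =>
    mul_nonneg (hπ i j) (sq_nonneg _)

lemma discDist_sq {X : Type*} [MetricSpace X] {N0 N1 : ℕ}
    (p0 : Fin N0 → ℝ) (ν0 : Fin N0 → X) (p1 : Fin N1 → ℝ) (ν1 : Fin N1 → X) :
    discDist p0 ν0 p1 ν1 ^ 2 = sInf {c : ℝ | ∃ π : Fin N0 → Fin N1 → ℝ,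
      IsCoupling p0 p1 π ∧ c = ∑ i, ∑ j, π i j * dist (ν0 i) (ν1 j) ^ 2} := by
  apply Real.sq_sqrt
  apply Real.sInf_nonneg
  rintro x ⟨π, hπ, rfl⟩
  exact cost_nonneg ν0 ν1 hπ.1

lemma sInf_eq_sInf_of_approx (s t : Set ℝ) (hs : ∀ x ∈ s, 0 ≤ x) (ht : ∀ x ∈ t, 0 ≤ x)
    (h1 : ∀ v ∈ t, ∃ w ∈ s, w ≤ v)
    (h2 : ∀ v ∈ s, ∀ ε > (0:ℝ), ∃ w ∈ t, w ≤ v + ε) : sInf s = sInf t := by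
  by_cases hse : s.Nonempty
  · have hte : t.Nonempty := by
      obtain ⟨v, hv⟩ := hse
      obtain ⟨w, hw, -⟩ := h2 v hv 1 one_pos
      exact ⟨w, hw⟩
    apply le_antisymm
    · apply le_csInf hte
      intro v hv
      obtain ⟨w, hw, hwv⟩ := h1 v hv
      exact le_trans (csInf_le ⟨0, hs⟩ hw) hwv
    · apply le_csInf hse
      intro v hv
      refine le_of_forall_pos_le_add fun ε hε => ?_
      obtain ⟨w, hw, hwv⟩ := h2 v hv ε hε
      exact le_trans (csInf_le ⟨0, ht⟩ hw) hwv
  · have hte : ¬ t.Nonempty := by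
      rintro ⟨v, hv⟩
      obtain ⟨w, hw, -⟩ := h1 v hv
      exact hse ⟨w, hw⟩
    rw [Set.not_nonempty_iff_eq_empty] at hse hte
    rw [hse, hte]

lemma sInf_eq_zero_of_all_zero (s : Set ℝ) (h : ∀ x ∈ s, x = 0) : sInf s = 0 := by
  by_cases hs : s.Nonempty
  · obtain ⟨x, hx⟩ := hs
    have : s = {0} := by
      apply Set.Subset.antisymm
      · intro y hy; exact h y hy
      · intro y hy; rw [Set.mem_singleton_iff] at hy; subst hy
        rw [← h x hx]; exact hx
    rw [this, csInf_singleton]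
  · rw [Set.not_nonempty_iff_eq_empty] at hs
    rw [hs, Real.sInf_empty]

/-- Linear-programming reformulation of the fixed-support barycenter problem: minimizing
the weighted sum of squared discrete transport distances over probability vectors
supported on the fixed points `ν` equals the value of the linear program over tuples of
transport plans with matching row sums. -/
theorem barycenter_lp_reformulation {X : Type*} [MetricSpace X] {N L : ℕ}
    (ν : Fin N → X) (lam : Fin L → ℝ) (hlam : IsProbVec lam)
    (Nk : Fin L → ℕ)
    (pk : (k : Fin L) → Fin (Nk k) → ℝ) (νk : (k : Fin L) → Fin (Nk k) → X)
    (hpk : ∀ k, IsProbVec (pk k)) :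
    sInf {v : ℝ | ∃ p : Fin N → ℝ, IsProbVec p ∧
        v = ∑ k, lam k * discDist p ν (pk k) (νk k) ^ 2} =
    sInf {v : ℝ | ∃ π : (k : Fin L) → Fin N → Fin (Nk k) → ℝ,
        (∀ k i j, 0 ≤ π k i j) ∧
        (∀ k j, ∑ i, π k i j = pk k j) ∧
        (∀ i, ∀ k k' : Fin L, ∑ j, π k i j = ∑ j, π k' i j) ∧
        v = ∑ k, lam k * ∑ i, ∑ j, π k i j * dist (ν i) (νk k j) ^ 2} := by
  rcases Nat.eq_zero_or_pos L with hL | hL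
  · -- degenerate case L = 0 : all elements of both sets are 0
    subst hL
    rw [sInf_eq_zero_of_all_zero _ (by rintro x ⟨p, hp, rfl⟩; simp),
        sInf_eq_zero_of_all_zero _ (by rintro x ⟨π, h1, h2, h3, rfl⟩; simp)]
  · -- main case
    have k0 : Fin L := ⟨0, hL⟩
    apply sInf_eq_sInf_of_approx
    · -- nonnegativity of LHS elements
      rintro x ⟨p, hp, rfl⟩
      exact Finset.sum_nonneg fun k _ => mul_nonneg (hlam.1 k) (sq_nonneg _)
    · -- nonnegativity of RHS elements
      rintro x ⟨π, hπ1, hπ2, hπ3, rfl⟩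
      exact Finset.sum_nonneg fun k _ => mul_nonneg (hlam.1 k) (cost_nonneg _ _ (hπ1 k))
    · -- from a feasible tuple of plans, build a barycenter candidate
      rintro v ⟨π, hπ1, hπ2, hπ3, rfl⟩
      set p : Fin N → ℝ := fun i => ∑ j, π k0 i j with hp_def
      have hp : IsProbVec p := by
        constructor
        · exact fun i => Finset.sum_nonneg fun j _ => hπ1 k0 i j
        · rw [hp_def]
          rw [Finset.sum_comm]
          rw [Finset.sum_congr rfl fun j _ => hπ2 k0 j]
          exact (hpk k0).2
      refine ⟨∑ k, lam k * discDist p ν (pk k) (νk k) ^ 2, ⟨p, hp, rfl⟩, ?_⟩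
      apply Finset.sum_le_sum
      intro k _
      apply mul_le_mul_of_nonneg_left _ (hlam.1 k)
      rw [discDist_sq]
      apply csInf_le ⟨0, by rintro x ⟨σ, hσ, rfl⟩; exact cost_nonneg _ _ hσ.1⟩
      refine ⟨π k, ⟨hπ1 k, fun i => ?_, hπ2 k⟩, rfl⟩
      exact (hπ3 i k k0)
    · -- from a barycenter candidate, build nearly optimal plans
      rintro v ⟨p, hp, rfl⟩ ε hε
      have hex : ∀ k : Fin L, ∃ σ : Fin N → Fin (Nk k) → ℝ,
          IsCoupling p (pk k) σ ∧
          (∑ i, ∑ j, σ i j * dist (ν i) (νk k j) ^ 2) ≤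
            discDist p ν (pk k) (νk k) ^ 2 + ε := by
        intro k
        have hne : {c : ℝ | ∃ σ : Fin N → Fin (Nk k) → ℝ, IsCoupling p (pk k) σ ∧
            c = ∑ i, ∑ j, σ i j * dist (ν i) (νk k j) ^ 2}.Nonempty :=
          ⟨_, fun i j => p i * pk k j, prod_isCoupling hp (hpk k), rfl⟩
        obtain ⟨a, ⟨σ, hσ, rfl⟩, ha⟩ := Real.lt_sInf_add_pos hne hε
        exact ⟨σ, hσ, by rw [discDist_sq]; exact ha.le⟩
      choose π hπc hπcost using hex
      refine ⟨∑ k, lam k * ∑ i, ∑ j, π k i j * dist (ν i) (νk k j) ^ 2,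
        ⟨π, fun k => (hπc k).1, fun k => (hπc k).2.2,
         fun i k k' => by rw [(hπc k).2.1 i, (hπc k').2.1 i], rfl⟩, ?_⟩
      calc ∑ k, lam k * ∑ i, ∑ j, π k i j * dist (ν i) (νk k j) ^ 2
          ≤ ∑ k, lam k * (discDist p ν (pk k) (νk k) ^ 2 + ε) :=
            Finset.sum_le_sum fun k _ =>
              mul_le_mul_of_nonneg_left (hπcost k) (hlam.1 k)
        _ = (∑ k, lam k * discDist p ν (pk k) (νk k) ^ 2) + ε := by
            simp only [mul_add, Finset.sum_add_distrib, ← Finset.sum_mul, hlam.2, one_mul]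
end
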